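/- Let M be an infinite pointed metric space whose set of cluster points M' is infinite. Then Lip₀(M) contains a sequence equivalent to the canonical basis of c₀. Concretely: there exist pairwise disjoint balls B(xₙ, rₙ) with xₙ ∈ M' and norm-one Lipschitz functions fₙ supported in B(xₙ, rₙ) such that (fₙ) is equivalent to the c₀ basis in Lip₀(M). -/

import Mathlib

open Filter Topology

/-- The Lipschitz norm (best Lipschitz constant) of a function on a metric space. -/
noncomputable def lipNorm {M : Type*} [MetricSpace M] (f : M → ℝ) : ℝ :=
  sSup {r : ℝ | ∃ x y : M, x ≠ y ∧ r = |f x - f y| / dist x y}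

/-- The set of cluster (accumulation) points of a metric space. -/
def clusterPts (M : Type*) [MetricSpace M] : Set M :=
  {p : M | ∀ ε : ℝ, 0 < ε → ∃ q : M, q ≠ p ∧ dist q p < ε}

/-!
Take cluster points `xₙ ≠ base` with radii `rₙ ≤ d(xₙ, base)` such that `rₙ + rₘ ≤ d(xₙ, xₘ)`
(any infinite Hausdorff space has a sequence of pairwise disjoint open sets), and let `fₙ` be the
tent `max 0 (rₙ - d(·, xₙ))`. For `g = ∑ λₙ fₙ`, two points see at most two tents, and when these
differ the separation gives `fᵢ(a) + fⱼ(b) ≤ d(a, b)`; hence `Lip g ≤ max |λₙ|`. Since `xᵢ` is a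
cluster point, `g` has slope exactly `|λᵢ|` between `xᵢ` and nearby points, so `(fₙ)` is even
isometrically equivalent to the `c₀` basis.
-/

open Metric Function

section DisjointSupports

variable {α ι : Type*} {f : ι → α → ℝ}

lemma sum_mul_eq_of_forall_ne_eq_zero [Fintype ι] (l : ι → ℝ) {p : α} {i : ι}
    (h : ∀ k ≠ i, f k p = 0) : ∑ k, l k * f k p = l i * f i p :=
  Finset.sum_eq_single_of_mem i (Finset.mem_univ i) fun k _ hk => by rw [h k hk, mul_zero]

lemma exists_forall_ne_eq_zero_of_pairwise_disjoint_support [Nonempty ι]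
    (hdisj : Pairwise (Disjoint on fun i => support (f i))) (p : α) :
    ∃ i, ∀ k ≠ i, f k p = 0 := by
  by_cases h : ∃ i, f i p ≠ 0
  · obtain ⟨i, hi⟩ := h
    exact ⟨i, fun k hk => notMem_support.1 ((hdisj hk).symm.notMem_of_mem_left hi)⟩
  · push Not at h
    exact ⟨Classical.arbitrary ι, fun k _ => h k⟩

end DisjointSupports

section

variable {M : Type*} [MetricSpace M]

section LipNorm

lemma lipNorm_nonneg (f : M → ℝ) : 0 ≤ lipNorm f :=
  Real.sSup_nonneg fun _ ⟨_, _, _, hr⟩ => hr ▸ by positivity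

lemma LipschitzWith.lipNorm_le {K : NNReal} {f : M → ℝ} (hf : LipschitzWith K f) :
    lipNorm f ≤ K := by
  refine Real.sSup_le ?_ K.2
  rintro _ ⟨a, b, hab, rfl⟩
  rw [div_le_iff₀ (dist_pos.2 hab), ← Real.dist_eq]
  exact hf.dist_le_mul a b

lemma LipschitzWith.div_le_lipNorm {K : NNReal} {f : M → ℝ} (hf : LipschitzWith K f)
    {a b : M} (hab : a ≠ b) : |f a - f b| / dist a b ≤ lipNorm f := by
  refine le_csSup ⟨K, ?_⟩ ⟨a, b, hab, rfl⟩
  rintro _ ⟨u, v, huv, rfl⟩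
  rw [div_le_iff₀ (dist_pos.2 huv), ← Real.dist_eq]
  exact hf.dist_le_mul u v

variable {ι : Type*} [Fintype ι] {f : ι → M → ℝ} {l : ι → ℝ}

lemma lipschitzWith_sum_mul_of_separated {L : ℝ} (hl : ∀ i, |l i| ≤ L)
    (hf : ∀ i, LipschitzWith 1 (f i))
    (hdisj : Pairwise (Disjoint on fun i => support (f i)))
    (hsep : Pairwise fun i j => ∀ a b, f i b = 0 → f j a = 0 → |f i a| + |f j b| ≤ dist a b) :
    LipschitzWith L.toNNReal fun p => ∑ i, l i * f i p := by
  cases isEmpty_or_nonempty ι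
  · simpa only [Finset.univ_eq_empty, Finset.sum_empty] using LipschitzWith.const' (0 : ℝ)
  have hL : 0 ≤ L := (abs_nonneg _).trans (hl (Classical.arbitrary ι))
  refine LipschitzWith.of_dist_le' fun a b => ?_
  obtain ⟨i, hi⟩ := exists_forall_ne_eq_zero_of_pairwise_disjoint_support hdisj a
  obtain ⟨j, hj⟩ := exists_forall_ne_eq_zero_of_pairwise_disjoint_support hdisj b
  rw [Real.dist_eq, sum_mul_eq_of_forall_ne_eq_zero l hi, sum_mul_eq_of_forall_ne_eq_zero l hj]
  rcases eq_or_ne i j with rfl | hij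
  · rw [← mul_sub, abs_mul, ← Real.dist_eq]
    simpa using mul_le_mul (hl i) ((hf i).dist_le_mul a b) dist_nonneg hL
  · calc |l i * f i a - l j * f j b| ≤ |l i| * |f i a| + |l j| * |f j b| := by
          rw [← abs_mul, ← abs_mul]; exact abs_sub _ _
      _ ≤ L * (|f i a| + |f j b|) := by rw [mul_add]; gcongr <;> exact hl _
      _ ≤ L * dist a b := by gcongr; exact hsep hij a b (hj i hij) (hi j hij.symm)

lemma abs_le_lipNorm_sum_mul {K : NNReal} (hg : LipschitzWith K fun p => ∑ k, l k * f k p)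
    {i : ι} {a b : M} (hab : a ≠ b) (ha : ∀ k ≠ i, f k a = 0) (hb : ∀ k ≠ i, f k b = 0)
    (hslope : |f i a - f i b| = dist a b) : |l i| ≤ lipNorm fun p => ∑ k, l k * f k p := by
  calc |l i| = |(∑ k, l k * f k a) - ∑ k, l k * f k b| / dist a b := by
        rw [sum_mul_eq_of_forall_ne_eq_zero l ha, sum_mul_eq_of_forall_ne_eq_zero l hb, ← mul_sub,
          abs_mul, hslope, mul_div_cancel_right₀ _ (dist_ne_zero.2 hab)]
    _ ≤ _ := hg.div_le_lipNorm hab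

end LipNorm

section Tent

def tent (x : M) (ρ : ℝ) (p : M) : ℝ := max 0 (ρ - dist p x)

variable {x y a b p : M} {ρ σ : ℝ}

lemma tent_nonneg : 0 ≤ tent x ρ p := le_max_left _ _

lemma tent_eq_zero_iff : tent x ρ p = 0 ↔ ρ ≤ dist p x := by
  rw [tent, max_eq_left_iff, sub_nonpos]

lemma support_tent : support (tent x ρ) = ball x ρ := by
  ext p
  rw [mem_support, Ne, tent_eq_zero_iff, not_le, mem_ball]

lemma tent_of_mem_ball (hp : p ∈ ball x ρ) : tent x ρ p = ρ - dist p x :=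
  max_eq_right (sub_nonneg.2 (mem_ball.1 hp).le)

lemma lipschitzWith_tent (x : M) (ρ : ℝ) : LipschitzWith 1 (tent x ρ) := by
  change LipschitzWith 1 fun p => max 0 (ρ - dist p x)
  simpa only [zero_add] using ((LipschitzWith.const ρ).sub (LipschitzWith.dist_left x)).const_max 0

lemma abs_sub_tent_eq_dist (hp : p ∈ ball x ρ) : |tent x ρ p - tent x ρ x| = dist p x := by
  rw [tent_of_mem_ball hp, tent_of_mem_ball (mem_ball_self (pos_of_mem_ball hp)), dist_self,
    sub_zero, sub_sub_cancel_left, abs_neg, abs_of_nonneg dist_nonneg]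

lemma tent_add_tent_le_dist (hxy : ρ + σ ≤ dist x y) (ha : σ ≤ dist a y) (hb : ρ ≤ dist b x) :
    tent x ρ a + tent y σ b ≤ dist a b := by
  -- If both tents are positive this is the triangle inequality along `x, a, b, y`; if one
  -- vanishes, `ha` or `hb` bounds the other.
  have := dist_triangle4 x a b y
  have := dist_triangle b a x
  have := dist_triangle a b y
  simp only [tent, dist_comm x a, dist_comm b a] at *
  rcases le_total 0 (ρ - dist a x) with h | h <;> rcases le_total 0 (σ - dist b y) with h' | h' <;>
    simp only [max_eq_left, max_eq_right, h, h'] <;> linarith [dist_nonneg (x := a) (y := b)]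

lemma lipNorm_tent (hx : x ∈ clusterPts M) (hρ : 0 < ρ) : lipNorm (tent x ρ) = 1 := by
  refine le_antisymm ((lipschitzWith_tent x ρ).lipNorm_le.trans_eq NNReal.coe_one) ?_
  obtain ⟨q, hqx, hq⟩ := hx ρ hρ
  calc (1 : ℝ) = |tent x ρ q - tent x ρ x| / dist q x := by
        rw [abs_sub_tent_eq_dist (mem_ball.2 hq), div_self (dist_ne_zero.2 hqx)]
    _ ≤ lipNorm (tent x ρ) := (lipschitzWith_tent x ρ).div_le_lipNorm hqx

lemma lipNorm_sum_mul_tent {ι : Type*} [Fintype ι] {x : ι → M} {r : ι → ℝ}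
    (hx : ∀ i, x i ∈ clusterPts M) (hr : ∀ i, 0 < r i)
    (hsep : Pairwise fun i j => r i + r j ≤ dist (x i) (x j)) (l : ι → ℝ) :
    lipNorm (fun p => ∑ i, l i * tent (x i) (r i) p) = ⨆ i, |l i| := by
  have hdisj : Pairwise (Disjoint on fun i => support (tent (x i) (r i))) := fun i j hij => by
    simpa only [onFun, support_tent] using ball_disjoint_ball (hsep hij)
  have hlip := lipschitzWith_sum_mul_of_separated (l := l)
    (le_ciSup (Set.finite_range _).bddAbove) (fun i => lipschitzWith_tent (x i) (r i)) hdisj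
    fun i j hij a b hb ha => by
      rw [abs_of_nonneg tent_nonneg, abs_of_nonneg tent_nonneg]
      exact tent_add_tent_le_dist (hsep hij) (tent_eq_zero_iff.1 ha) (tent_eq_zero_iff.1 hb)
  refine le_antisymm ?_ (Real.iSup_le (fun i => ?_) (lipNorm_nonneg _))
  · exact hlip.lipNorm_le.trans_eq (Real.coe_toNNReal _ (Real.iSup_nonneg fun i => abs_nonneg _))
  · have hvanish : ∀ p ∈ ball (x i) (r i), ∀ k ≠ i, tent (x k) (r k) p = 0 := fun p hp k hk =>
      notMem_support.1 ((hdisj hk).notMem_of_mem_right (by simpa only [support_tent] using hp))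
    obtain ⟨q, hqx, hq⟩ := hx i (r i) (hr i)
    exact abs_le_lipNorm_sum_mul hlip hqx (hvanish q hq) (hvanish _ (mem_ball_self (hr i)))
      (abs_sub_tent_eq_dist hq)

end Tent

lemma Set.Infinite.exists_seq_add_le_dist {S : Set M} (hS : S.Infinite) :
    ∃ (x : ℕ → M) (ρ : ℕ → ℝ), (∀ n, x n ∈ S) ∧ (∀ n, 0 < ρ n) ∧
      Pairwise fun n m => ρ n + ρ m ≤ dist (x n) (x m) := by
  have := hS.to_subtype
  obtain ⟨U, hUinf, hUopen, hUdisj⟩ := exists_seq_infinite_isOpen_pairwise_disjoint S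
  choose y hy using fun n => (hUinf n).nonempty
  choose ε hε hball using fun n => Metric.isOpen_iff.1 (hUopen n) (y n) (hy n)
  have hfar : ∀ n m, n ≠ m → ε n ≤ dist (y n) (y m) := fun n m hnm => by
    by_contra! h
    exact Set.disjoint_left.1 (hUdisj hnm) (hball n (mem_ball'.2 h)) (hy m)
  refine ⟨fun n => y n, fun n => ε n / 2, fun n => (y n).2, fun n => half_pos (hε n),
    fun n m hnm => ?_⟩
  have := hfar n m hnm
  have := hfar m n hnm.symm
  rw [dist_comm (y m)] at this
  simp only [Subtype.dist_eq] at *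
  linarith

end

/-- If the set of cluster points of a pointed metric space `M` is infinite, then
`Lip₀(M)` contains a sequence equivalent to the `c₀` basis: there are pairwise disjoint
balls `B(xₙ, rₙ)` centered at cluster points and norm-one Lipschitz functions `fₙ`
supported in `B(xₙ, rₙ)` forming a sequence equivalent to the `c₀` basis. -/
theorem stmt18 {M : Type*} [MetricSpace M] (base : M)
    (hM : (clusterPts M).Infinite) :
    ∃ (x : ℕ → M) (r : ℕ → ℝ) (f : ℕ → M → ℝ),
      (∀ n, x n ∈ clusterPts M) ∧ (∀ n, 0 < r n) ∧
      (Pairwise fun n m => Disjoint (Metric.ball (x n) (r n)) (Metric.ball (x m) (r m))) ∧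
      (∀ n, LipschitzWith 1 (f n)) ∧ (∀ n, f n base = 0) ∧
      (∀ n, lipNorm (f n) = 1) ∧
      (∀ n, ∀ p ∉ Metric.ball (x n) (r n), f n p = 0) ∧
      ∃ a b : ℝ, 0 < a ∧ a ≤ b ∧ ∀ (N : ℕ) (l : Fin N → ℝ),
        a * (⨆ i, |l i|) ≤ lipNorm (fun p => ∑ i, l i * f (i : ℕ) p) ∧
        lipNorm (fun p => ∑ i, l i * f (i : ℕ) p) ≤ b * (⨆ i, |l i|) := by
  obtain ⟨x, ρ, hxS, hρ, hsep⟩ := (hM.sdiff (Set.finite_singleton base)).exists_seq_add_le_dist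
  set r : ℕ → ℝ := fun n => min (ρ n) (dist base (x n))
  have hr : ∀ n, 0 < r n := fun n => lt_min (hρ n) (dist_pos.2 (Ne.symm (hxS n).2))
  have hrsep : Pairwise fun n m => r n + r m ≤ dist (x n) (x m) := fun n m hnm =>
    (add_le_add (min_le_left _ _) (min_le_left _ _)).trans (hsep hnm)
  refine ⟨x, r, fun n => tent (x n) (r n), fun n => (hxS n).1, hr,
    fun n m hnm => ball_disjoint_ball (hrsep hnm), fun n => lipschitzWith_tent _ _,
    fun n => tent_eq_zero_iff.2 (min_le_right _ _), fun n => lipNorm_tent (hxS n).1 (hr n),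
    fun n p hp => tent_eq_zero_iff.2 (not_lt.1 hp), 1, 1, one_pos, le_rfl, fun N l => ?_⟩
  rw [one_mul, lipNorm_sum_mul_tent (x := fun i : Fin N => x i) (fun i => (hxS i).1)
    (fun i => hr i) (hrsep.comp_of_injective Fin.val_injective) l]
  exact ⟨le_rfl, le_rfl⟩
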